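/- Let n \ge 9, f = 0 if n is even and f = 1 if n is odd, and for 1 \le r \le \lceil n/2 \rceil - 4 define m_{n,r} = \sum_{i=0}^{2} 2^{n-4-i} + \sum_{i=0}^{\lceil n/2 \rceil - 4 - r} 2^{n-8-2i} + 2^{2r-1-f}. Then (n+1) m_{n,r} - ex(m_{n,r}) = 2^{n-1}, where ex(m) = \sum_{i} t_i 2^{t_i} + \sum_i 2 i 2^{t_i} over the binary expansion m = \sum_i 2^{t_i} with strictly decreasing exponents t_i. -/

import Mathlib

/-!
Peeling off the leading bit gives `ex (2^t + m) = t 2^t + 2m + ex m` for `m < 2^t`, so `c x - ex x`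
splits as `(c - t) 2^t` plus the same quantity for the rest of `x` with `c` lowered by two.
The low part `x` of `m_{n,r}` has bits `e, e+1, e+3, …, e+2s-1`, and by induction on `s`
it satisfies `(k+1) x - ex x = 2^k` with `k = e+2s+1 = n-6`: each new bit `2^k` contributes
`3·2^k`. The three leading bits `n-4, n-5, n-6` contribute `(5·4 + 4·2 + 3) 2^{n-6}`, and
adding the `2^{n-6}` from `x` gives `32·2^{n-6} = 2^{n-1}`.
-/

/-- Closed-form hypercube edge-isoperimetric function: for `m` with binary expansion
`m = 2^{t_0} + ... + 2^{t_s}` with `t_0 > ... > t_s`, this equals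
`∑ t_i 2^{t_i} + ∑ 2 i 2^{t_i}`. -/
def ex : ℕ → ℕ
  | 0 => 0
  | (m+1) =>
      Nat.log2 (m+1) * 2 ^ Nat.log2 (m+1) + 2 * ((m+1) - 2 ^ Nat.log2 (m+1))
        + ex ((m+1) - 2 ^ Nat.log2 (m+1))
decreasing_by
  exact Nat.sub_lt (Nat.succ_pos m) (Nat.two_pow_pos _)

/-- Closed formula for `ex_m(Q_{n,2})`, valid for `1 ≤ m ≤ 2^{n-1}`:
`ex m` for `m ≤ 2^{n-2}`, and `ex m + 2m - 2^{n-1}` for `2^{n-2} < m ≤ 2^{n-1}`. -/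
def exQ (n m : ℕ) : ℤ :=
  if m ≤ 2 ^ (n-2) then (ex m : ℤ) else (ex m : ℤ) + 2 * m - 2 ^ (n-1)

/-- `ξ_m(Q_{n,2}) = (n+1) m - ex_m(Q_{n,2})`. -/
def xi (n m : ℕ) : ℤ := ((n : ℤ) + 1) * m - exQ n m

open Finset

theorem ex_two_pow_add {t m : ℕ} (h : m < 2 ^ t) :
    ex (2 ^ t + m) = t * 2 ^ t + 2 * m + ex m := by
  obtain ⟨k, hk⟩ : ∃ k, 2 ^ t + m = k + 1 := ⟨2 ^ t + m - 1, by have := Nat.two_pow_pos t; omega⟩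
  have hlog : Nat.log2 (k + 1) = t := by
    rw [Nat.log2_eq_log_two]
    exact Nat.log_eq_of_pow_le_of_lt_pow (by omega) (by rw [pow_succ]; omega)
  rw [hk, ex, hlog, ← hk, Nat.add_sub_cancel_left]

theorem mul_sub_ex_two_pow_add (c : ℤ) {t m : ℕ} (h : m < 2 ^ t) :
    c * ↑(2 ^ t + m) - ex (2 ^ t + m) = (c - t) * 2 ^ t + ((c - 2) * m - ex m) := by
  rw [ex_two_pow_add h]
  push_cast
  ring

def lowBits (e s : ℕ) : ℕ := 2 ^ e + ∑ j ∈ range s, 2 ^ (e + 1 + 2 * j)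

theorem lowBits_succ (e s : ℕ) : lowBits e (s + 1) = 2 ^ (e + 2 * s + 1) + lowBits e s := by
  rw [lowBits, lowBits, sum_range_succ, show e + 1 + 2 * s = e + 2 * s + 1 by ring]
  ring

theorem lowBits_lt (e s : ℕ) : lowBits e s < 2 ^ (e + 2 * s + 1) := by
  induction s with
  | zero => simp [lowBits, pow_succ]
  | succ s ih =>
    have : 2 ^ (e + 2 * (s + 1) + 1) = 4 * 2 ^ (e + 2 * s + 1) := by
      rw [show e + 2 * (s + 1) + 1 = e + 2 * s + 1 + 2 by ring, pow_add]
      ring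
    rw [lowBits_succ]
    omega

theorem mul_sub_ex_lowBits (e s : ℕ) :
    ((e + 2 * s + 2 : ℕ) : ℤ) * lowBits e s - ex (lowBits e s) = 2 ^ (e + 2 * s + 1) := by
  induction s with
  | zero =>
    rw [lowBits, sum_range_zero, mul_sub_ex_two_pow_add _ (Nat.two_pow_pos e), ex.eq_1]
    push_cast
    ring
  | succ s ih =>
    rw [lowBits_succ, mul_sub_ex_two_pow_add _ (lowBits_lt e s)]
    push_cast at ih ⊢
    rw [show (e : ℤ) + 2 * (s + 1) + 2 - 2 = e + 2 * s + 2 by ring, ih,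
      show e + 2 * (s + 1) + 1 = e + 2 * s + 1 + 2 by ring]
    ring

theorem mul_sub_ex_three_leading_bits {k x : ℕ} (hx : x < 2 ^ k)
    (hxk : ((k + 1 : ℕ) : ℤ) * x - ex x = 2 ^ k) :
    ((k + 7 : ℕ) : ℤ) * ↑(2 ^ (k + 2) + (2 ^ (k + 1) + (2 ^ k + x)))
      - ex (2 ^ (k + 2) + (2 ^ (k + 1) + (2 ^ k + x))) = 2 ^ (k + 5) := by
  have h2 : 2 ^ k + x < 2 ^ (k + 1) := by rw [pow_succ]; omega
  have h3 : 2 ^ (k + 1) + (2 ^ k + x) < 2 ^ (k + 2) := by rw [pow_succ _ (k + 1)]; omega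
  rw [mul_sub_ex_two_pow_add _ h3, mul_sub_ex_two_pow_add _ h2, mul_sub_ex_two_pow_add _ hx]
  push_cast at hxk ⊢
  rw [show (k : ℤ) + 7 - 2 - 2 - 2 = k + 1 by ring, hxk]
  ring

open Finset in
theorem xi_m_nr_general (n r f m : ℕ) (hf : f = if Even n then 0 else 1)
    (hr1 : 1 ≤ r) (hr2 : r ≤ (n+1) / 2 - 4)
    (hm : m = 2 ^ (n-4) + 2 ^ (n-5) + 2 ^ (n-6)
        + (∑ i ∈ range ((n+1) / 2 - 3 - r), 2 ^ (n - 8 - 2 * i)) + 2 ^ (2*r - 1 - f)) :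
    ((n : ℤ) + 1) * m - ex m = 2 ^ (n-1) := by
  set s := (n + 1) / 2 - 3 - r
  set e := 2 * r - 1 - f
  have hn : n = e + 2 * s + 7 := by
    split_ifs at hf with h
    · obtain ⟨k, rfl⟩ := h; omega
    · obtain ⟨k, rfl⟩ := Nat.not_even_iff_odd.mp h; omega
  have hsum : ∑ i ∈ range s, 2 ^ (n - 8 - 2 * i) = ∑ j ∈ range s, 2 ^ (e + 1 + 2 * j) := by
    rw [← sum_range_reflect (fun j ↦ 2 ^ (e + 1 + 2 * j)) s]
    refine sum_congr rfl fun i hi ↦ ?_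
    have := mem_range.mp hi
    congr 1
    omega
  rw [hsum] at hm
  clear_value s e
  subst hn
  have hmk : m = 2 ^ (e + 2 * s + 1 + 2) + (2 ^ (e + 2 * s + 1 + 1)
      + (2 ^ (e + 2 * s + 1) + lowBits e s)) := by
    rw [hm, lowBits, show e + 2 * s + 7 - 4 = e + 2 * s + 1 + 2 by omega,
      show e + 2 * s + 7 - 5 = e + 2 * s + 1 + 1 by omega,
      show e + 2 * s + 7 - 6 = e + 2 * s + 1 by omega]
    ring
  have := mul_sub_ex_three_leading_bits (lowBits_lt e s) (mul_sub_ex_lowBits e s)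
  rw [hmk, show e + 2 * s + 7 - 1 = e + 2 * s + 1 + 5 by omega]
  push_cast at this ⊢
  linarith

open Finset in
/-- Case 1 of Lemma 7: for `n ≥ 9`, `f = 0` if `n` even and `f = 1` if `n` odd, and
`1 ≤ r ≤ ⌈n/2⌉ - 4`, the breakpoint
`m_{n,r} = ∑_{i=0}^{2} 2^{n-4-i} + ∑_{i=0}^{⌈n/2⌉-4-r} 2^{n-8-2i} + 2^{2r-1-f}`
satisfies `(n+1) m_{n,r} - ex(m_{n,r}) = 2^{n-1}`. -/
theorem xi_m_nr (n r f m : ℕ) (hn : 9 ≤ n) (hf : f = if Even n then 0 else 1)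
    (hr1 : 1 ≤ r) (hr2 : r ≤ (n+1) / 2 - 4)
    (hm : m = 2 ^ (n-4) + 2 ^ (n-5) + 2 ^ (n-6)
        + (∑ i ∈ range ((n+1) / 2 - 3 - r), 2 ^ (n - 8 - 2 * i)) + 2 ^ (2*r - 1 - f)) :
    ((n : ℤ) + 1) * m - ex m = 2 ^ (n-1) :=
  xi_m_nr_general n r f m hf hr1 hr2 hm
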